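/- If G is a König-Egerváry graph and v ∈ ker(G), then G - v is a König-Egerváry graph. -/

import Mathlib

/-!
Every graph satisfies α + μ ≤ n, so it suffices to show α(G - v) ≥ α(G) - 1 and
μ(G - v) ≥ μ(G). For the second, fix a critical independent set I; it contains v.
For X ⊆ N(I), deleting N(X) ∩ I from I raises the difference by at least |X| - |N(X) ∩ I|, so
criticality gives |X| ≤ |N(X) ∩ I|, and in case of equality the smaller set is critical too,
hence still contains v. This is Hall's condition for matching N(I) into I \ {v}.
Dropping from a maximum matching of G the edges that meet N(I) costs at most |N(I)| edges
and leaves a matching avoiding I ∪ N(I); adding the Hall matching gives a matching of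
G - v at least as large.
-/

open SimpleGraph

variable {V : Type*}

/-- A set of vertices is independent: no two of its vertices are adjacent. -/
def IsIndep (G : SimpleGraph V) (s : Set V) : Prop :=
  s.Pairwise fun a b => ¬ G.Adj a b

/-- The independence number α(G). -/
noncomputable def alphaNum (G : SimpleGraph V) : ℕ :=
  sSup {n | ∃ s : Set V, IsIndep G s ∧ s.ncard = n}

/-- The matching number μ(G). -/
noncomputable def muNum (G : SimpleGraph V) : ℕ :=
  sSup {n | ∃ M : SimpleGraph.Subgraph G, M.IsMatching ∧ M.edgeSet.ncard = n}

/-- The neighborhood N(A) of a set of vertices. -/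
def nbhd (G : SimpleGraph V) (A : Set V) : Set V := {v | ∃ a ∈ A, G.Adj a v}

/-- The difference d(A) = |A| - |N(A)| of a set of vertices. -/
noncomputable def diffSet (G : SimpleGraph V) (A : Set V) : ℤ :=
  (A.ncard : ℤ) - (nbhd G A).ncard

/-- The critical difference d(G). -/
noncomputable def critDiff (G : SimpleGraph V) : ℤ :=
  sSup {d | ∃ I : Set V, IsIndep G I ∧ diffSet G I = d}

/-- A critical independent set: an independent set attaining the critical difference. -/
def IsCriticalIndep (G : SimpleGraph V) (A : Set V) : Prop :=
  IsIndep G A ∧ diffSet G A = critDiff G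

/-- ker(G): the intersection of all critical independent sets. -/
noncomputable def kerSet (G : SimpleGraph V) : Set V :=
  ⋂₀ {A | IsCriticalIndep G A}

/-- A maximum independent set. -/
noncomputable def IsMaxIndep (G : SimpleGraph V) (S : Set V) : Prop :=
  IsIndep G S ∧ S.ncard = alphaNum G

/-- core(G): the intersection of all maximum independent sets. -/
noncomputable def coreSet (G : SimpleGraph V) : Set V :=
  ⋂₀ {S | IsMaxIndep G S}

/-- A König–Egerváry graph: α(G) + μ(G) = n(G). -/
def KonigEgervary (G : SimpleGraph V) : Prop :=
  alphaNum G + muNum G = Nat.card V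

section Extremal

lemma apply_le_sSup_of_finite {α β : Type*} [Finite α] [ConditionallyCompleteLinearOrder β]
    {P : α → Prop} (f : α → β) {a : α} (ha : P a) :
    f a ≤ sSup {b | ∃ a, P a ∧ f a = b} :=
  le_csSup ((Set.toFinite {a | P a}).image f).bddAbove ⟨a, ha, rfl⟩

lemma exists_apply_eq_sSup_of_finite {α β : Type*} [Finite α]
    [ConditionallyCompleteLinearOrder β]
    {P : α → Prop} (f : α → β) {a : α} (ha : P a) :
    ∃ a, P a ∧ f a = sSup {b | ∃ a, P a ∧ f a = b} :=
  Set.Nonempty.csSup_mem (s := {b | ∃ a, P a ∧ f a = b}) ⟨f a, a, ha, rfl⟩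
    ((Set.toFinite {a | P a}).image f)

variable [Finite V] (G : SimpleGraph V)

lemma IsIndep.ncard_le_alphaNum {s : Set V} (hs : IsIndep G s) : s.ncard ≤ alphaNum G :=
  apply_le_sSup_of_finite Set.ncard hs

lemma exists_isMaxIndep : ∃ S, IsMaxIndep G S :=
  exists_apply_eq_sSup_of_finite (P := IsIndep G) Set.ncard (a := ∅) (by simp [IsIndep])

lemma SimpleGraph.Subgraph.IsMatching.ncard_edgeSet_le_muNum {M : G.Subgraph} (hM : M.IsMatching) :
    M.edgeSet.ncard ≤ muNum G :=
  apply_le_sSup_of_finite (fun M : G.Subgraph => M.edgeSet.ncard) hM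

lemma exists_isMatching_ncard_edgeSet_eq_muNum :
    ∃ M : G.Subgraph, M.IsMatching ∧ M.edgeSet.ncard = muNum G :=
  exists_apply_eq_sSup_of_finite (fun M : G.Subgraph => M.edgeSet.ncard) (a := ⊥)
    (by simp [Subgraph.IsMatching])

lemma IsIndep.diffSet_le_critDiff {I : Set V} (hI : IsIndep G I) : diffSet G I ≤ critDiff G :=
  apply_le_sSup_of_finite (diffSet G) hI

lemma exists_isCriticalIndep : ∃ I, IsCriticalIndep G I :=
  exists_apply_eq_sSup_of_finite (P := IsIndep G) (diffSet G) (a := ∅) (by simp [IsIndep])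

end Extremal

namespace SimpleGraph.Subgraph.IsMatching

variable {G : SimpleGraph V} {M : G.Subgraph}

lemma eq_of_mem_edgeSet (hM : M.IsMatching) {e e' : Sym2 V} {x : V} (he : e ∈ M.edgeSet)
    (he' : e' ∈ M.edgeSet) (hx : x ∈ e) (hx' : x ∈ e') : e = e' := by
  obtain ⟨y, rfl⟩ := Sym2.mem_iff_exists.mp hx
  obtain ⟨y', rfl⟩ := Sym2.mem_iff_exists.mp hx'
  rw [hM.eq_of_adj_left (Subgraph.mem_edgeSet.mp he) (Subgraph.mem_edgeSet.mp he')]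

lemma ncard_le_of_forall_exists_mem (hM : M.IsMatching) {E : Set (Sym2 V)} {T : Set V}
    (hT : T.Finite) (hE : E ⊆ M.edgeSet) (hET : ∀ e ∈ E, ∃ x ∈ T, x ∈ e) :
    E.ncard ≤ T.ncard := by
  rcases E.eq_empty_or_nonempty with rfl | ⟨e, he⟩
  · simp
  have : Nonempty V := ⟨(hET e he).choose⟩
  choose! f hfT hfe using hET
  exact Set.ncard_le_ncard_of_injOn f hfT
    (fun e he e' he' hee => hM.eq_of_mem_edgeSet (hE he) (hE he') (hfe e he) (hee ▸ hfe e' he'))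
    hT

lemma ncard_le_ncard_edgeSet (hM : M.IsMatching) {s : Set V} (hfin : M.edgeSet.Finite)
    (hs : s ⊆ M.verts) (hsep : ∀ x ∈ s, ∀ y ∈ s, ¬ M.Adj x y) :
    s.ncard ≤ M.edgeSet.ncard := by
  rcases s.eq_empty_or_nonempty with rfl | ⟨x, -⟩
  · simp
  have : Nonempty (Sym2 V) := ⟨s(x, x)⟩
  have hedge : ∀ x ∈ s, ∃ e ∈ M.edgeSet, x ∈ e := fun x hx =>
    let ⟨y, hxy, _⟩ := hM (hs hx)
    ⟨s(x, y), hxy, Sym2.mem_mk_left x y⟩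
  choose! f hfM hxf using hedge
  refine Set.ncard_le_ncard_of_injOn f hfM (fun x hx y hy hxy => ?_) hfin
  by_contra hne
  have hfx : f x = s(x, y) := (Sym2.mem_and_mem_iff hne).mp ⟨hxf x hx, hxy ▸ hxf y hy⟩
  exact hsep x hx y hy (Subgraph.mem_edgeSet.mp (hfx ▸ hfM x hx))

lemma exists_isMatching_disjoint_ncard_edgeSet_le [Finite V] (hM : M.IsMatching) (T : Set V) :
    ∃ M' : G.Subgraph, M'.IsMatching ∧ Disjoint M'.verts T ∧
      M.edgeSet.ncard ≤ T.ncard + M'.edgeSet.ncard := by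
  let M' : G.Subgraph :=
    { verts := {x | x ∉ T ∧ ∃ y, y ∉ T ∧ M.Adj x y}
      Adj := fun x y => M.Adj x y ∧ x ∉ T ∧ y ∉ T
      adj_sub := fun h => M.adj_sub h.1
      edge_vert := fun h => ⟨h.2.1, _, h.2.2, h.1⟩
      symm := ⟨fun _ _ h => ⟨h.1.symm, h.2.2, h.2.1⟩⟩ }
  have hM' : M'.IsMatching := fun x ⟨hx, y, hy, hxy⟩ =>
    ⟨y, ⟨hxy, hx, hy⟩, fun _ h => hM.eq_of_adj_left h.1 hxy⟩
  refine ⟨M', hM', Set.disjoint_left.mpr fun x hx => hx.1, ?_⟩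
  have hsplit : M.edgeSet ⊆ {e ∈ M.edgeSet | ∃ x ∈ T, x ∈ e} ∪ M'.edgeSet := by
    intro e he
    induction e using Sym2.ind with
    | _ x y =>
      by_cases hx : x ∈ T
      · exact Or.inl ⟨he, x, hx, Sym2.mem_mk_left x y⟩
      by_cases hy : y ∈ T
      · exact Or.inl ⟨he, y, hy, Sym2.mem_mk_right x y⟩
      exact Or.inr ⟨he, hx, hy⟩
  calc M.edgeSet.ncard
      ≤ ({e ∈ M.edgeSet | ∃ x ∈ T, x ∈ e} ∪ M'.edgeSet).ncard :=
        Set.ncard_le_ncard hsplit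
    _ ≤ {e ∈ M.edgeSet | ∃ x ∈ T, x ∈ e}.ncard + M'.edgeSet.ncard :=
        Set.ncard_union_le _ _
    _ ≤ T.ncard + M'.edgeSet.ncard := by
      gcongr
      exact hM.ncard_le_of_forall_exists_mem T.toFinite (fun e he => he.1) (fun e he => he.2)

lemma ncard_edgeSet_le_muNum_induce [Finite V] (hM : M.IsMatching) {s : Set V}
    (hs : M.verts ⊆ s) : M.edgeSet.ncard ≤ muNum (G.induce s) := by
  let N : (G.induce s).Subgraph :=
    { verts := Subtype.val ⁻¹' M.verts
      Adj := fun a b => M.Adj a b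
      adj_sub := fun h => M.adj_sub h
      edge_vert := fun h => M.edge_vert h
      symm := ⟨fun _ _ h => h.symm⟩ }
  have hN : N.IsMatching := fun a ha => by
    obtain ⟨w, haw, huniq⟩ := hM ha
    exact ⟨⟨w, hs (M.edge_vert haw.symm)⟩, haw, fun b hb => Subtype.ext (huniq b hb)⟩
  have himage : M.edgeSet ⊆ Sym2.map Subtype.val '' N.edgeSet := by
    intro e he
    induction e using Sym2.ind with
    | _ x y =>
      exact ⟨s(⟨x, hs (M.edge_vert he)⟩, ⟨y, hs (M.edge_vert he.symm)⟩), he, rfl⟩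
  calc M.edgeSet.ncard ≤ (Sym2.map Subtype.val '' N.edgeSet).ncard := Set.ncard_le_ncard himage
    _ = N.edgeSet.ncard := Set.ncard_image_of_injective _ (Sym2.map.injective Subtype.val_injective)
    _ ≤ muNum (G.induce s) := hN.ncard_edgeSet_le_muNum

end SimpleGraph.Subgraph.IsMatching

lemma SimpleGraph.Subgraph.ncard_edgeSet_sup [Finite V] {G : SimpleGraph V} {H H' : G.Subgraph}
    (h : Disjoint H.verts H'.verts) :
    (H ⊔ H').edgeSet.ncard = H.edgeSet.ncard + H'.edgeSet.ncard := by
  have hdisj : Disjoint H.edgeSet H'.edgeSet := Set.disjoint_left.mpr fun e he he' => by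
    induction e using Sym2.ind with
    | _ x y => exact h.notMem_of_mem_left (H.edge_vert he) (H'.edge_vert he')
  rw [edgeSet_sup, Set.ncard_union_eq hdisj]

section KonigEgervary

variable [Finite V] (G : SimpleGraph V)

lemma alphaNum_add_muNum_le : alphaNum G + muNum G ≤ Nat.card V := by
  obtain ⟨S, hS, hScard⟩ := exists_isMaxIndep G
  obtain ⟨M, hM, hMcard⟩ := exists_isMatching_ncard_edgeSet_eq_muNum G
  have hMS : M.edgeSet.ncard ≤ Sᶜ.ncard := by
    refine hM.ncard_le_of_forall_exists_mem Sᶜ.toFinite subset_rfl fun e he => ?_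
    induction e using Sym2.ind with
    | _ x y =>
      have hxy := M.adj_sub he
      by_cases hx : x ∈ S
      · exact ⟨y, fun hy => hS hx hy hxy.ne hxy, Sym2.mem_mk_right x y⟩
      · exact ⟨x, hx, Sym2.mem_mk_left x y⟩
  rw [← hScard, ← hMcard, ← Set.ncard_add_ncard_compl S]
  omega

lemma alphaNum_le_alphaNum_induce_add_ncard_compl (s : Set V) :
    alphaNum G ≤ alphaNum (G.induce s) + sᶜ.ncard := by
  obtain ⟨S, hS, hScard⟩ := exists_isMaxIndep G
  have hind : IsIndep (G.induce s) (Subtype.val ⁻¹' S) :=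
    fun a ha b hb hab => hS ha hb (Subtype.val_injective.ne hab)
  have hcard : (Subtype.val ⁻¹' S : Set s).ncard = (s ∩ S).ncard := by
    rw [← Set.ncard_image_of_injective _ Subtype.val_injective, Subtype.image_preimage_coe]
  calc alphaNum G = (S ∩ s).ncard + (S \ s).ncard := by
        rw [Set.ncard_inter_add_ncard_sdiff_eq_ncard, hScard]
    _ ≤ alphaNum (G.induce s) + sᶜ.ncard := by
      refine add_le_add ?_ (Set.ncard_le_ncard (Set.sdiff_subset_compl S s))
      rw [Set.inter_comm, ← hcard]
      exact hind.ncard_le_alphaNum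

end KonigEgervary

lemma exists_isMatching_of_forall_ncard_le_ncard_nbhd_inter [Finite V] (G : SimpleGraph V)
    {s t : Set V} (hst : Disjoint s t) (hall : ∀ X ⊆ s, X.ncard ≤ (nbhd G X ∩ t).ncard) :
    ∃ M : G.Subgraph, M.IsMatching ∧ M.verts ⊆ s ∪ t ∧ s.ncard ≤ M.edgeSet.ncard := by
  have := Fintype.ofFinite V
  classical
  let B : SimpleGraph V := G ⊓ fromRel fun x y => x ∈ s ∧ y ∈ t
  have hB : B.IsBipartiteWith s t := ⟨hst, fun x y h => by
    rcases (fromRel_adj _ x y).mp h.2 with ⟨-, h | h⟩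
    exacts [Or.inl h, Or.inr h.symm]⟩
  have hallB : ∀ X ⊆ s, X.ncard ≤ (⋃ x ∈ X, B.neighborSet x).ncard := by
    refine fun X hX => (hall X hX).trans (Set.ncard_le_ncard ?_)
    rintro y ⟨⟨x, hx, hxy⟩, hy⟩
    exact Set.mem_biUnion hx ⟨hxy, (fromRel_adj _ x y).mpr ⟨hxy.ne, Or.inl ⟨hX hx, hy⟩⟩⟩
  obtain ⟨Mb, hsMb, hMb⟩ := exists_isMatching_of_forall_ncard_le hB hallB
  let M : G.Subgraph := { Mb with adj_sub := fun h => (Mb.adj_sub h).1 }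
  have hM : M.IsMatching := hMb
  refine ⟨M, hM, fun x hx => ?_, hM.ncard_le_ncard_edgeSet M.edgeSet.toFinite hsMb ?_⟩
  · obtain ⟨y, hxy, -⟩ := hMb hx
    rcases hB.mem_of_adj (Mb.adj_sub hxy) with h | h
    exacts [Or.inl h.1, Or.inr h.1]
  · intro x hx y hy hxy
    rcases hB.mem_of_adj (Mb.adj_sub hxy) with h | h
    exacts [hst.notMem_of_mem_left hy h.2, hst.notMem_of_mem_left hx h.1]

section Kernel

variable (G : SimpleGraph V)

lemma IsIndep.disjoint_nbhd {I : Set V} (hI : IsIndep G I) : Disjoint I (nbhd G I) :=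
  Set.disjoint_left.mpr fun _ hw ⟨_, ha, haw⟩ => hI ha hw haw.ne haw

lemma diffSet_add_ncard_le_diffSet_sdiff_nbhd [Finite V] {I X : Set V} (hX : X ⊆ nbhd G I) :
    diffSet G I + X.ncard - (nbhd G X ∩ I).ncard ≤ diffSet G (I \ nbhd G X) := by
  have hnbhd : nbhd G (I \ nbhd G X) ⊆ nbhd G I \ X := by
    rintro w ⟨a, ⟨haI, haX⟩, haw⟩
    exact ⟨⟨a, haI, haw⟩, fun hwX => haX ⟨w, hwX, haw.symm⟩⟩
  have hI := Set.ncard_inter_add_ncard_sdiff_eq_ncard I (nbhd G X)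
  have hN := Set.ncard_sdiff_add_ncard_of_subset hX
  have hle := Set.ncard_le_ncard hnbhd
  rw [Set.inter_comm] at hI
  unfold diffSet
  omega

lemma ncard_le_ncard_nbhd_inter_of_mem_kerSet [Finite V] {I : Set V} (hI : IsCriticalIndep G I)
    {v : V} (hv : v ∈ kerSet G) {X : Set V} (hX : X ⊆ nbhd G I) :
    X.ncard ≤ (nbhd G X ∩ (I \ {v})).ncard := by
  have hgain := diffSet_add_ncard_le_diffSet_sdiff_nbhd G hX
  have hJ : IsIndep G (I \ nbhd G X) := Set.Pairwise.mono Set.sdiff_subset hI.1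
  have hle := hJ.diffSet_le_critDiff
  have hcrit := hI.2
  rw [← Set.inter_sdiff_assoc]
  by_cases hvX : v ∈ nbhd G X
  · -- `I \ N(X)` misses `v ∈ ker G`, so it is not critical
    have hne : diffSet G (I \ nbhd G X) ≠ critDiff G := fun h => (hv _ ⟨hJ, h⟩).2 hvX
    rw [Set.ncard_sdiff_singleton_of_mem (show v ∈ nbhd G X ∩ I from ⟨hvX, hv I hI⟩)]
    omega
  · rw [Set.sdiff_singleton_eq_self fun h => hvX h.1]
    omega

lemma muNum_le_muNum_induce_compl_singleton_of_mem_kerSet [Finite V] {v : V} (hv : v ∈ kerSet G) :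
    muNum G ≤ muNum (G.induce {v}ᶜ) := by
  obtain ⟨I, hI⟩ := exists_isCriticalIndep G
  have hIN := IsIndep.disjoint_nbhd G hI.1
  obtain ⟨H, hH, hHverts, hHcard⟩ := exists_isMatching_of_forall_ncard_le_ncard_nbhd_inter G
    (hIN.symm.mono_right Set.sdiff_subset)
    fun X hX => ncard_le_ncard_nbhd_inter_of_mem_kerSet G hI hv hX
  obtain ⟨M, hM, hMcard⟩ := exists_isMatching_ncard_edgeSet_eq_muNum G
  obtain ⟨M', hM', hM'N, hMM'⟩ := hM.exists_isMatching_disjoint_ncard_edgeSet_le (nbhd G I)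
  -- a vertex of `I` has all its neighbours in `N(I)`, so `M'` cannot cover it
  have hM'I : Disjoint M'.verts I := Set.disjoint_left.mpr fun x hx hxI => by
    obtain ⟨y, hxy, -⟩ := hM' hx
    exact hM'N.notMem_of_mem_left (M'.edge_vert hxy.symm) ⟨x, hxI, M'.adj_sub hxy⟩
  have hdisj : Disjoint H.verts M'.verts := by
    refine Set.disjoint_of_subset_left hHverts (Set.disjoint_union_left.mpr ⟨hM'N.symm, ?_⟩)
    exact hM'I.symm.mono_left Set.sdiff_subset
  have hvH : (H ⊔ M').verts ⊆ {v}ᶜ := by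
    rintro x (hx | hx) rfl
    · rcases hHverts hx with h | h
      exacts [hIN.notMem_of_mem_left (hv I hI) h, h.2 rfl]
    · exact hM'I.notMem_of_mem_left hx (hv I hI)
  have hHM' : (H ⊔ M').IsMatching :=
    hH.sup hM' (hdisj.mono H.support_subset_verts M'.support_subset_verts)
  calc muNum G = M.edgeSet.ncard := hMcard.symm
    _ ≤ (nbhd G I).ncard + M'.edgeSet.ncard := hMM'
    _ ≤ H.edgeSet.ncard + M'.edgeSet.ncard := by gcongr
    _ = (H ⊔ M').edgeSet.ncard := (Subgraph.ncard_edgeSet_sup hdisj).symm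
    _ ≤ muNum (G.induce {v}ᶜ) := hHM'.ncard_edgeSet_le_muNum_induce hvH

end Kernel

theorem stmt_16 [Fintype V] (G : SimpleGraph V) (hKE : KonigEgervary G) (v : V)
    (hv : v ∈ kerSet G) :
    KonigEgervary (G.induce ({v}ᶜ : Set V)) := by
  have hα := alphaNum_le_alphaNum_induce_add_ncard_compl G {v}ᶜ
  have hμ := muNum_le_muNum_induce_compl_singleton_of_mem_kerSet G hv
  have hle := alphaNum_add_muNum_le (G.induce ({v}ᶜ : Set V))
  have hn := Set.ncard_add_ncard_compl ({v} : Set V)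
  rw [compl_compl, Set.ncard_singleton] at hα
  rw [Set.ncard_singleton, ← Nat.card_coe_set_eq] at hn
  unfold KonigEgervary at hKE ⊢
  omega
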